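/- arXiv:2306.16820 — 6 statements merged into one kernel-verified Lean document; each statement's English description precedes it below -/
import Mathlib

section
/- Let k ≥ 2 and let A ⊆ ℕ satisfy r_{1,k}(A,n) = r_{1,k}(ℕ∖A, n) for all sufficiently large n. Then liminf_{n→∞} r_{1,k}(A,n)/n > 0, i.e., there exist c > 0 and N such that r_{1,k}(A,n) ≥ c·n for all n ≥ N. -/
/-!
Comparing `r(A, n) - r(Aᶜ, n) = Σ_{b ≤ n/k} ([n - kb ∈ A] + [b ∈ A] - 1)` at `n` and `n + k`
shows that eventually `m ∈ A ↔ m / k ∉ A`. Under this rule, splitting `t = kq + s` turns the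
number `d(m)` of `t ≤ m` with `[t ∈ A] ≠ [m - t ∈ A]` into the sum of `d((m - s) / k)` over the
digits `s < k`, up to an error `O(kM)`; hence `d` grows linearly as soon as it exceeds a constant
on a long enough interval. That it does follows from the switches of `A` (places where membership
changes): above `M` they include `k^j (x + 1) - 1` for all `j`, and a switch `y` far out has
`y + 1` divisible by a large power of `k`, so the reflection `t ↦ m - t` can carry at most one
of the switches `k^j (x + 1) - 1` to another switch, and every other one contributes to `d(m)`.
Finally every `b` counted by `d(n / k)` gives a representation of `n` by `A` or by `Aᶜ`, and the
two counts are equal.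
-/

noncomputable def weightedRep (A : Set ℕ) (k n : ℕ) : ℕ :=
  {p : ℕ × ℕ | p.1 ∈ A ∧ p.2 ∈ A ∧ n = p.1 + k * p.2}.ncard

open Finset

def FlipsAbove (k M : ℕ) (A : Set ℕ) : Prop :=
  ∀ m, M ≤ m → (m ∈ A ↔ m / k ∉ A)

def IsSwitch (A : Set ℕ) (x : ℕ) : Prop :=
  ¬(x ∈ A ↔ x + 1 ∈ A)

open Classical in
noncomputable def mismatch (A : Set ℕ) (m : ℕ) : Finset ℕ :=
  {t ∈ range (m + 1) | ¬(t ∈ A ↔ m - t ∈ A)}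

section Representations

variable {A : Set ℕ} {k : ℕ}

open Classical in
theorem weightedRep_eq_card_filter (hk : 0 < k) (n : ℕ) :
    weightedRep A k n = #{b ∈ range (n / k + 1) | n - k * b ∈ A ∧ b ∈ A} := by
  have hset : {p : ℕ × ℕ | p.1 ∈ A ∧ p.2 ∈ A ∧ n = p.1 + k * p.2} =
      (fun b => (n - k * b, b)) '' ↑({b ∈ range (n / k + 1) | n - k * b ∈ A ∧ b ∈ A}) := by
    ext ⟨a, b⟩
    simp only [Set.mem_ofPred_eq, Set.mem_image, coe_filter, mem_range, Prod.mk.injEq,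
      Nat.lt_succ_iff, Nat.le_div_iff_mul_le hk]
    constructor
    · rintro ⟨ha, hb, rfl⟩
      exact ⟨b, ⟨by rw [mul_comm]; omega, by simpa using ha, hb⟩, by simp, rfl⟩
    · rintro ⟨b, ⟨hbn, hA, hb⟩, rfl, rfl⟩
      rw [mul_comm] at hbn
      exact ⟨hA, hb, by omega⟩
  rw [weightedRep, hset, Set.ncard_image_of_injective _ fun _ _ h => congrArg Prod.snd h,
    Set.ncard_coe_finset]

theorem weightedRep_sub_weightedRep_compl (hk : 0 < k) (n : ℕ) :
    (weightedRep A k n : ℤ) - weightedRep Aᶜ k n =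
      ∑ b ∈ range (n / k + 1), (A.indicator 1 (n - k * b) : ℤ) +
        ∑ b ∈ range (n / k + 1), (A.indicator 1 b : ℤ) - (n / k + 1 : ℕ) := by
  classical
  have hcard : ((n / k + 1 : ℕ) : ℤ) = ∑ b ∈ range (n / k + 1), (1 : ℤ) := by simp
  rw [weightedRep_eq_card_filter hk, weightedRep_eq_card_filter hk, card_filter, card_filter,
    hcard]
  push_cast
  rw [← sum_add_distrib, ← sum_sub_distrib, ← sum_sub_distrib]
  refine sum_congr rfl fun b _ => ?_
  by_cases h₁ : n - k * b ∈ A <;> by_cases h₂ : b ∈ A <;> simp [h₁, h₂]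

theorem weightedRep_sub_weightedRep_compl_add (hk : 0 < k) (n : ℕ) :
    ((weightedRep A k (n + k) : ℤ) - weightedRep Aᶜ k (n + k)) -
        (weightedRep A k n - weightedRep Aᶜ k n) =
      A.indicator 1 (n + k) + A.indicator 1 (n / k + 1) - 1 := by
  have hshift : ∀ b, n + k - k * (b + 1) = n - k * b := fun b => by rw [mul_add, mul_one]; omega
  rw [weightedRep_sub_weightedRep_compl hk, weightedRep_sub_weightedRep_compl hk,
    Nat.add_div_right n hk, sum_range_succ' fun b => (A.indicator 1 (n + k - k * b) : ℤ),
    sum_range_succ fun b => (A.indicator 1 b : ℤ)]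
  simp only [hshift, mul_zero, Nat.sub_zero]
  push_cast
  ring

theorem flipsAbove_of_weightedRep_eq {N : ℕ} (hk : 0 < k)
    (h : ∀ n ≥ N, weightedRep A k n = weightedRep Aᶜ k n) : FlipsAbove k (N + k) A := by
  intro m hm
  obtain ⟨n, rfl⟩ : ∃ n, m = n + k := ⟨m - k, by omega⟩
  have key := weightedRep_sub_weightedRep_compl_add (A := A) hk n
  rw [h n (by omega), h (n + k) (by omega), sub_self, sub_self, sub_zero] at key
  rw [Nat.add_div_right n hk]
  by_cases h₁ : n + k ∈ A <;> by_cases h₂ : n / k + 1 ∈ A <;> simp [h₁, h₂] at key ⊢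

end Representations

theorem IsSwitch.reflect {A : Set ℕ} {x m : ℕ} (hx : IsSwitch A x) (hxm : x + 1 ≤ m)
    (h₀ : x ∉ mismatch A m) (h₁ : x + 1 ∉ mismatch A m) : IsSwitch A (m - x - 1) := by
  simp only [mismatch, mem_filter, mem_range, not_and, not_not] at h₀ h₁
  have h₀ := h₀ (by omega)
  have h₁ := h₁ (by omega)
  unfold IsSwitch at hx ⊢
  rw [show m - x - 1 + 1 = m - x by omega, ← h₀, show m - x - 1 = m - (x + 1) by omega, ← h₁]
  tauto

theorem le_of_mem_mismatch {A : Set ℕ} {m t : ℕ} (ht : t ∈ mismatch A m) : t ≤ m := by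
  simp only [mismatch, mem_filter, mem_range] at ht
  omega

theorem le_card_add_one_of_pairs_meet {D : Finset ℕ} {x : ℕ → ℕ} {J : ℕ}
    (hgap : ∀ {i j}, i < j → x i + 1 < x j)
    (hmeet : ∀ {i j}, i < j → j < J → x i ∈ D ∨ x i + 1 ∈ D ∨ x j ∈ D ∨ x j + 1 ∈ D) :
    J ≤ #D + 1 := by
  classical
  have hgood : #{j ∈ range J | x j ∈ D ∨ x j + 1 ∈ D} ≤ #D := by
    let g : ℕ → ℕ := fun j => if x j ∈ D then x j else x j + 1
    have hg : ∀ j, x j ≤ g j ∧ g j ≤ x j + 1 := fun j => by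
      simp only [g]; split_ifs <;> omega
    refine card_le_card_of_injOn g (fun j hj => ?_) (fun i _ j _ hij => ?_)
    · simp only [coe_filter, Set.mem_ofPred_eq] at hj
      simp only [g, mem_coe]
      split_ifs with h
      · exact h
      · exact hj.2.resolve_left h
    · by_contra hne
      rcases Nat.lt_or_gt_of_ne hne with h | h
      · have := hgap h; have := hg i; have := hg j; omega
      · have := hgap h; have := hg i; have := hg j; omega
  have hbad : #{j ∈ range J | ¬(x j ∈ D ∨ x j + 1 ∈ D)} ≤ 1 := by
    refine card_le_one.2 fun i hi j hj => ?_
    simp only [mem_filter, mem_range, not_or] at hi hj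
    by_contra hne
    rcases Nat.lt_or_gt_of_ne hne with h | h
    · have := hmeet h hj.1; tauto
    · have := hmeet h hi.1; tauto
  have := card_filter_add_card_filter_not (s := range J) fun j => x j ∈ D ∨ x j + 1 ∈ D
  rw [card_range] at this
  omega

theorem card_le_card_filter_add_two_mul {s : Finset ℕ} {n : ℕ} (hs : ∀ q ∈ s, q ≤ n) (M : ℕ) :
    #s ≤ #{q ∈ s | M ≤ q ∧ q + M ≤ n} + 2 * M := by
  have hout : {q ∈ s | ¬(M ≤ q ∧ q + M ≤ n)} ⊆ range M ∪ Ioc (n - M) n := by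
    intro q hq
    simp only [mem_filter] at hq
    have := hs q hq.1
    simp only [mem_union, mem_range, mem_Ioc]
    omega
  have hcard := (card_le_card hout).trans (card_union_le _ _)
  rw [card_range, Nat.card_Ioc] at hcard
  have := card_filter_add_card_filter_not (s := s) fun q => M ≤ q ∧ q + M ≤ n
  omega

theorem succ_le_sum_sub_div_add_one {k : ℕ} (hk : 0 < k) (m : ℕ) :
    m + 1 ≤ ∑ s ∈ range k, ((m - s) / k + 1) := by
  rw [← card_range (m + 1), card_eq_sum_card_fiberwise (f := (· % k)) (t := range k)
    fun t _ => mem_range.2 (Nat.mod_lt t hk)]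
  refine sum_le_sum fun s _ => ?_
  rw [← card_range ((m - s) / k + 1)]
  refine card_le_card_of_injOn (· / k) (fun t ht => ?_) (fun t ht u hu htu => ?_)
  · simp only [coe_filter, mem_range, Set.mem_ofPred_eq] at ht
    have := Nat.div_add_mod t k
    simp only [mem_coe, mem_range, Nat.lt_succ_iff, Nat.le_div_iff_mul_le hk]
    rw [mul_comm]
    omega
  · simp only [coe_filter, Set.mem_ofPred_eq] at ht hu
    rw [← Nat.div_add_mod t k, ← Nat.div_add_mod u k, ht.2, hu.2]
    exact congrArg (k * · + s) htu

namespace FlipsAbove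

variable {k M : ℕ} {A : Set ℕ}

theorem pos (hA : FlipsAbove k M A) : 0 < M :=
  Nat.pos_of_ne_zero fun h => by simpa using hA 0 h.le

theorem isSwitch_iff (hA : FlipsAbove k M A) {x : ℕ} (hx : M ≤ x) :
    IsSwitch A x ↔ k ∣ x + 1 ∧ IsSwitch A (x / k) := by
  unfold IsSwitch
  rw [hA x hx, hA (x + 1) (by omega), Nat.succ_div]
  split_ifs with hdvd <;> simp [hdvd, not_iff_not]

theorem isSwitch_mul_succ_sub_one (hA : FlipsAbove k M A) (hk : 0 < k) {y : ℕ}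
    (hy : IsSwitch A y) (hMy : M ≤ k * (y + 1) - 1) : IsSwitch A (k * (y + 1) - 1) := by
  have hsucc : k * (y + 1) - 1 + 1 = k * (y + 1) := Nat.sub_add_cancel (Nat.mul_pos hk y.succ_pos)
  have hdiv : (k * (y + 1) - 1) / k = y := by
    rw [show k * (y + 1) - 1 = k * y + (k - 1) by rw [mul_add, mul_one]; omega,
      Nat.mul_add_div hk, Nat.div_eq_of_lt (by omega), add_zero]
  rw [hA.isSwitch_iff hMy, hsucc, hdiv]
  exact ⟨dvd_mul_right k _, hy⟩

theorem isSwitch_pow_mul_succ_sub_one (hA : FlipsAbove k M A) (hk : 0 < k) {x : ℕ}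
    (hx : IsSwitch A x) (hMx : M ≤ x) (j : ℕ) : IsSwitch A (k ^ j * (x + 1) - 1) := by
  induction j with
  | zero => simpa using hx
  | succ j ih =>
    have hpos : 0 < k ^ j * (x + 1) := by positivity
    have hx_le : x + 1 ≤ k ^ (j + 1) * (x + 1) := Nat.le_mul_of_pos_left _ (by positivity)
    have h := hA.isSwitch_mul_succ_sub_one hk ih
    rw [Nat.sub_add_cancel hpos, ← mul_assoc, ← pow_succ'] at h
    exact h (by omega)

theorem exists_isSwitch (hA : FlipsAbove k M A) (hk : 0 < k) :
    ∃ x, M ≤ x ∧ x < k * M ∧ IsSwitch A x := by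
  by_contra! h
  have hconst : ∀ y, M ≤ y → y ≤ k * M → (y ∈ A ↔ M ∈ A) := by
    intro y hy
    induction y, hy using Nat.le_induction with
    | base => simp
    | succ y hy ih =>
      intro hyk
      rw [← ih (by omega)]
      exact (not_not.1 (h y hy (by omega))).symm
  have hkM : M ≤ k * M := Nat.le_mul_of_pos_left M hk
  have hflip := hA (k * M) hkM
  rw [Nat.mul_div_cancel_left M hk, hconst (k * M) hkM le_rfl] at hflip
  simp at hflip

theorem exists_isSwitch_seq (hA : FlipsAbove k M A) (hk : 2 ≤ k) :
    ∃ x : ℕ → ℕ, (∀ j, M ≤ x j ∧ x j < k ^ (j + 1) * M ∧ IsSwitch A (x j)) ∧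
      ∀ {i j}, i < j → x i + 1 < x j := by
  obtain ⟨x₀, hMx₀, hx₀k, hx₀⟩ := hA.exists_isSwitch (by omega)
  have hx_succ : ∀ j, k ^ j * (x₀ + 1) - 1 + 1 = k ^ j * (x₀ + 1) := fun j =>
    Nat.sub_add_cancel (Nat.one_le_iff_ne_zero.2 (by positivity))
  have hx₀_le : ∀ j, x₀ + 1 ≤ k ^ j * (x₀ + 1) := fun j =>
    Nat.le_mul_of_pos_left _ (by positivity)
  refine ⟨fun j => k ^ j * (x₀ + 1) - 1, fun j => ⟨?_, ?_, ?_⟩, fun {i j} hij => ?_⟩ <;>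
    dsimp only
  · have := hx₀_le j
    omega
  · have : k ^ j * (x₀ + 1) ≤ k ^ (j + 1) * M := by
      rw [pow_succ, mul_assoc]; exact Nat.mul_le_mul_left _ hx₀k
    have := hx₀_le j
    omega
  · exact hA.isSwitch_pow_mul_succ_sub_one (by omega) hx₀ hMx₀ j
  · have h₁ : k ^ (i + 1) * (x₀ + 1) ≤ k ^ j * (x₀ + 1) :=
      Nat.mul_le_mul_right _ (Nat.pow_le_pow_right (by omega) hij)
    have h₂ : 2 * (k ^ i * (x₀ + 1)) ≤ k ^ (i + 1) * (x₀ + 1) := by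
      rw [pow_succ', mul_assoc]; exact Nat.mul_le_mul_right _ hk
    have := hx_succ i
    have := hx_succ j
    have := hx₀_le i
    have := hA.pos
    omega

theorem pow_dvd_succ_of_isSwitch (hA : FlipsAbove k M A) (hk : 0 < k) (i : ℕ) :
    ∀ {x : ℕ}, IsSwitch A x → k ^ i * (M + 1) ≤ x + 1 → k ^ i ∣ x + 1 := by
  induction i with
  | zero => simp
  | succ i ih =>
    intro x hx hle
    have hMx : M ≤ x := by
      have : M + 1 ≤ k ^ (i + 1) * (M + 1) := Nat.le_mul_of_pos_left _ (by positivity)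
      omega
    obtain ⟨⟨q, hq⟩, hsw⟩ := (hA.isSwitch_iff hMx).1 hx
    have hxq : x / k + 1 = q := by
      rw [← Nat.succ_div_of_dvd ⟨q, hq⟩, hq, Nat.mul_div_cancel_left q hk]
    have hq_le : k ^ i * (M + 1) ≤ x / k + 1 := by
      rw [hxq]
      refine Nat.le_of_mul_le_mul_left ?_ hk
      rw [← mul_assoc, ← pow_succ', ← hq]
      exact hle
    rw [hq, pow_succ']
    exact mul_dvd_mul_left k (hxq ▸ ih hsw hq_le)

theorem le_card_mismatch_add_one (hA : FlipsAbove k M A) (hk : 2 ≤ k) (J : ℕ) {m : ℕ}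
    (hm : (M + 2) * k ^ (J + M) ≤ m) : J ≤ #(mismatch A m) + 1 := by
  obtain ⟨x, hx, hgap⟩ := hA.exists_isSwitch_seq hk
  obtain ⟨K, hK⟩ : ∃ K, k ^ (J + M) = K := ⟨_, rfl⟩
  have hxK : ∀ j < J, x j + 1 < K := by
    intro j hj
    calc x j + 1 ≤ k ^ (j + 1) * M := (hx j).2.1
      _ < k ^ (j + 1) * k ^ M := Nat.mul_lt_mul_of_pos_left (Nat.lt_pow_self hk) (by positivity)
      _ = k ^ (j + 1 + M) := by ring
      _ ≤ K := hK ▸ Nat.pow_le_pow_right (by omega) (by omega)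
  have hxm : ∀ j < J, x j + 1 + K * (M + 1) ≤ m := by
    intro j hj
    have := hxK j hj
    have : K * (M + 1) + K = (M + 2) * K := by ring
    rw [hK] at hm
    omega
  -- A switch `x j` that the reflection `t ↦ m - t` carries to the switch `m - x j - 1` makes
  -- `K ∣ m - x j`; two such `j` would give `K ∣ x j - x i < K`.
  have hreflect : ∀ j < J, x j ∉ mismatch A m → x j + 1 ∉ mismatch A m → K ∣ m - x j := by
    intro j hj h₀ h₁
    have := hxm j hj
    have := hA.pow_dvd_succ_of_isSwitch (by omega) (J + M) ((hx j).2.2.reflect (by omega) h₀ h₁)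
      (by rw [hK]; omega)
    rwa [hK, show m - x j - 1 + 1 = m - x j by omega] at this
  refine le_card_add_one_of_pairs_meet hgap fun {i j} hij hj => ?_
  by_contra! h
  have hdvd := Nat.dvd_sub (hreflect i (hij.trans hj) h.1 h.2.1) (hreflect j hj h.2.2.1 h.2.2.2)
  have := hgap hij
  have := hxm j hj
  have := hxK j hj
  have := Nat.eq_zero_of_dvd_of_lt hdvd (by omega)
  omega

theorem mul_add_mem_mismatch (hA : FlipsAbove k M A) (hk : 0 < k) {m s q : ℕ} (hs : s < k)
    (hq : q ∈ mismatch A ((m - s) / k)) (hMq : M ≤ q) (hqM : q + M ≤ (m - s) / k) :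
    k * q + s ∈ mismatch A m := by
  have h₁ := Nat.mul_div_le (m - s) k
  have h₂ : k * (q + M) ≤ k * ((m - s) / k) := Nat.mul_le_mul_left k hqM
  have h₃ : M ≤ k * M := Nat.le_mul_of_pos_left M hk
  have h₄ : q ≤ k * q := Nat.le_mul_of_pos_left q hk
  have h₅ := hA.pos
  rw [mul_add] at h₂
  have hdiv : (k * q + s) / k = q := by
    rw [Nat.mul_add_div hk, Nat.div_eq_of_lt hs, add_zero]
  have hdiv' : (m - (k * q + s)) / k = (m - s) / k - q := by
    rw [← Nat.sub_mul_div, show m - s - k * q = m - (k * q + s) by omega]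
  simp only [mismatch, mem_filter, mem_range] at hq ⊢
  refine ⟨by omega, ?_⟩
  rw [hA (k * q + s) (by omega), hA (m - (k * q + s)) (by omega), hdiv, hdiv']
  tauto

theorem sum_card_mismatch_le (hA : FlipsAbove k M A) (hk : 0 < k) (m : ℕ) :
    ∑ s ∈ range k, #(mismatch A ((m - s) / k)) ≤ #(mismatch A m) + 2 * k * M := by
  rw [card_eq_sum_card_fiberwise (s := mismatch A m) (f := (· % k)) (t := range k)
    fun t _ => mem_range.2 (Nat.mod_lt t hk)]
  calc ∑ s ∈ range k, #(mismatch A ((m - s) / k))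
      ≤ ∑ s ∈ range k, (#{t ∈ mismatch A m | t % k = s} + 2 * M) := by
        refine sum_le_sum fun s hs => ?_
        refine (card_le_card_filter_add_two_mul (fun _ => le_of_mem_mismatch) M).trans
          (Nat.add_le_add_right ?_ _)
        have hs := mem_range.1 hs
        refine card_le_card_of_injOn (k * · + s) (fun q hq => ?_) (fun q _ q' _ h => ?_)
        · simp only [coe_filter, Set.mem_ofPred_eq] at hq
          simp only [coe_filter, Set.mem_ofPred_eq]
          exact ⟨hA.mul_add_mem_mismatch hk hs hq.1 hq.2.1 hq.2.2,
            by rw [Nat.mul_add_mod, Nat.mod_eq_of_lt hs]⟩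
        · simpa [hk.ne'] using h
    _ = _ := by rw [sum_add_distrib, sum_const, card_range, smul_eq_mul]; ring

theorem exists_linear_lower_bound (hA : FlipsAbove k M A) (hk : 2 ≤ k) :
    ∃ ε : ℝ, 0 < ε ∧ ∃ P : ℕ, ∀ m ≥ P, 4 * M + ε * (m + 1) ≤ #(mismatch A m) := by
  obtain ⟨P, hP⟩ : ∃ P, ∀ m ≥ P, 4 * M + 1 ≤ #(mismatch A m) :=
    ⟨_, fun m hm => by have := hA.le_card_mismatch_add_one hk (4 * M + 2) hm; omega⟩
  -- On `[P, k (P + 1))` this `ε` reduces the claim to `4M + 1 ≤ d m`; beyond, the error `2kM` of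
  -- the digit recursion is absorbed because `k • 4M - 2kM ≥ 4M`.
  set ε : ℝ := 1 / (k * (P + 1))
  refine ⟨ε, by positivity, P, fun m => ?_⟩
  induction m using Nat.strong_induction_on with | _ m ih => ?_
  intro hm
  by_cases hsmall : m < k * (P + 1)
  · have h₁ : (4 * M + 1 : ℝ) ≤ #(mismatch A m) := by exact_mod_cast hP m hm
    have h₂ : ε * (m + 1) ≤ 1 := by
      rw [div_mul_eq_mul_div, one_mul, div_le_one (by positivity)]
      exact_mod_cast hsmall
    linarith
  push Not at hsmall
  have hrec : ∑ s ∈ range k, (#(mismatch A ((m - s) / k)) : ℝ) ≤ #(mismatch A m) + 2 * k * M := by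
    exact_mod_cast hA.sum_card_mismatch_le (by omega) m
  have hsum : (m + 1 : ℝ) ≤ ∑ s ∈ range k, (((m - s) / k : ℕ) + 1 : ℝ) := by
    exact_mod_cast succ_le_sum_sub_div_add_one (by omega) m
  have hih : ∑ s ∈ range k, (4 * M + ε * (((m - s) / k : ℕ) + 1) : ℝ) ≤
      ∑ s ∈ range k, (#(mismatch A ((m - s) / k)) : ℝ) := by
    refine sum_le_sum fun s hs => ih _ ?_ ?_
    · exact lt_of_le_of_lt (Nat.div_le_div_right (Nat.sub_le m s))
        (Nat.div_lt_self (by nlinarith) (by omega))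
    · rw [ge_iff_le, Nat.le_div_iff_mul_le (by omega)]
      have := mem_range.1 hs
      have : k * (P + 1) = P * k + k := by ring
      omega
  rw [sum_add_distrib, sum_const, card_range, nsmul_eq_mul, ← mul_sum] at hih
  have hε : ε * (m + 1) ≤ ε * ∑ s ∈ range k, (((m - s) / k : ℕ) + 1 : ℝ) :=
    mul_le_mul_of_nonneg_left hsum (by positivity)
  have hkM : (4 * M : ℝ) ≤ 2 * k * M := by
    have : (2 : ℝ) ≤ k := by exact_mod_cast hk
    nlinarith [(Nat.cast_nonneg M : (0 : ℝ) ≤ M)]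
  nlinarith

theorem card_mismatch_div_le (hA : FlipsAbove k M A) (hk : 0 < k) (n : ℕ) :
    #(mismatch A (n / k)) ≤ weightedRep A k n + weightedRep Aᶜ k n + 2 * M := by
  classical
  refine (card_le_card_filter_add_two_mul (fun _ => le_of_mem_mismatch) M).trans
    (Nat.add_le_add_right ?_ _)
  rw [weightedRep_eq_card_filter hk, weightedRep_eq_card_filter hk]
  refine (card_le_card fun b hb => ?_).trans (card_union_le _ _)
  simp only [mismatch, mem_filter, mem_range] at hb
  obtain ⟨⟨hbn, hb⟩, hMb, hbM⟩ := hb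
  have h₁ := Nat.mul_div_le n k
  have h₂ : k * (b + M) ≤ k * (n / k) := Nat.mul_le_mul_left k hbM
  have h₃ : M ≤ k * M := Nat.le_mul_of_pos_left M hk
  rw [mul_add] at h₂
  have hflip := hA (n - k * b) (by omega)
  rw [Nat.sub_mul_div] at hflip
  simp only [mem_union, mem_filter, mem_range, Set.mem_compl_iff]
  by_cases hbA : b ∈ A <;> tauto

end FlipsAbove

theorem stmt_1 (k : ℕ) (hk : 2 ≤ k) (A : Set ℕ)
    (hA : ∀ᶠ n in Filter.atTop, weightedRep A k n = weightedRep Aᶜ k n) :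
    ∃ c : ℝ, 0 < c ∧ ∃ N : ℕ, ∀ n ≥ N, c * n ≤ (weightedRep A k n : ℝ) := by
  obtain ⟨N, hN⟩ := Filter.eventually_atTop.1 hA
  have hflip : FlipsAbove k (N + k) A := flipsAbove_of_weightedRep_eq (by omega) hN
  obtain ⟨ε, hε, P, hP⟩ := hflip.exists_linear_lower_bound hk
  refine ⟨ε / (2 * k), by positivity, N + k * P, fun n hn => ?_⟩
  have hlower := hP (n / k) ((Nat.le_div_iff_mul_le (by omega)).2 (by rw [mul_comm]; omega))
  have hupper : (#(mismatch A (n / k)) : ℝ) ≤ 2 * weightedRep A k n + 2 * (N + k) := by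
    have := hflip.card_mismatch_div_le (by omega) n
    rw [← hN n (by omega)] at this
    exact_mod_cast (by omega : #(mismatch A (n / k)) ≤ 2 * weightedRep A k n + 2 * (N + k))
  have hn : (n : ℝ) ≤ k * ((n / k : ℕ) + 1) := by
    exact_mod_cast (Nat.lt_mul_div_succ n (by omega : 0 < k)).le
  calc ε / (2 * k) * n ≤ ε / (2 * k) * (k * ((n / k : ℕ) + 1)) := by gcongr
    _ = ε * ((n / k : ℕ) + 1) / 2 := by field_simp
    _ ≤ weightedRep A k n := by push_cast at hlower; linarith
end

section
/- Let k ≥ 2 and A ⊆ ℕ with r_{1,k}(A,n) = r_{1,k}(ℕ∖A,n) for all sufficiently large n. Then limsup_{n→∞} r_{1,k}(A,n)/n ≤ 1/k. -/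
lemma weightedRep_le (A : Set ℕ) (k n : ℕ) (hk : 0 < k) :
    weightedRep A k n ≤ n / k + 1 := by
  have hs : {p : ℕ × ℕ | p.1 ∈ A ∧ p.2 ∈ A ∧ n = p.1 + k * p.2} ⊆
      (fun a => (n - k * a, a)) '' Set.Iic (n / k) := by
    rintro p ⟨-, -, h⟩
    refine ⟨p.2, (Nat.le_div_iff_mul_le hk).2 (by rw [mul_comm]; omega), ?_⟩
    exact Prod.ext (by simp; omega) rfl
  calc weightedRep A k n ≤ ((fun a => (n - k * a, a)) '' Set.Iic (n / k)).ncard :=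
        Set.ncard_le_ncard hs ((Set.finite_Iic _).image _)
    _ ≤ (Set.Iic (n / k)).ncard := Set.ncard_image_le (Set.finite_Iic _)
    _ = n / k + 1 := by
        rw [← Finset.coe_Iic, Set.ncard_coe_finset, Nat.card_Iic]

theorem stmt_2 (k : ℕ) (hk : 2 ≤ k) (A : Set ℕ)
    (hA : ∀ᶠ n in Filter.atTop, weightedRep A k n = weightedRep Aᶜ k n) :
    Filter.limsup (fun n : ℕ => (weightedRep A k n : ℝ) / n) Filter.atTop ≤ 1 / k := by
  have hk0 : 0 < k := by omega
  have hkR : (0 : ℝ) < k := by exact_mod_cast hk0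
  have hle : ∀ᶠ n in Filter.atTop,
      (weightedRep A k n : ℝ) / n ≤ 1 / (k : ℝ) + 1 / (n : ℕ) := by
    filter_upwards [Filter.eventually_ge_atTop 1] with n hn
    have hnR : (0 : ℝ) < n := by exact_mod_cast hn
    have h1 : (weightedRep A k n : ℝ) ≤ (n / k : ℕ) + 1 := by
      exact_mod_cast weightedRep_le A k n hk0
    have h2 : ((n / k : ℕ) : ℝ) ≤ (n : ℝ) / k := by
      rw [le_div_iff₀ hkR]
      exact_mod_cast Nat.div_mul_le_self n k
    calc (weightedRep A k n : ℝ) / n ≤ ((n : ℝ) / k + 1) / n := by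
          gcongr ?_ / _
          linarith
      _ = 1 / (k : ℝ) + 1 / (n : ℝ) := by field_simp
  have h0 : Filter.Tendsto (fun n : ℕ => 1 / (n : ℝ)) Filter.atTop (nhds 0) :=
    tendsto_one_div_atTop_nhds_zero_nat
  have hgt : Filter.Tendsto (fun n : ℕ => 1 / (k : ℝ) + 1 / (n : ℝ)) Filter.atTop
      (nhds (1 / (k : ℝ))) := by
    simpa using tendsto_const_nhds.add h0
  have hgl := hgt.limsup_eq
  have hbdd : Filter.IsBoundedUnder (· ≤ ·) Filter.atTop
      (fun n : ℕ => 1 / (k : ℝ) + 1 / (n : ℝ)) := hgt.isBoundedUnder_le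
  have hcob : Filter.IsCoboundedUnder (· ≤ ·) Filter.atTop
      (fun n : ℕ => (weightedRep A k n : ℝ) / n) := by
    apply Filter.IsBoundedUnder.isCoboundedUnder_le
    apply Filter.isBoundedUnder_of
    exact ⟨0, fun n => by positivity⟩
  calc Filter.limsup (fun n : ℕ => (weightedRep A k n : ℝ) / n) Filter.atTop
      ≤ Filter.limsup (fun n : ℕ => 1 / (k : ℝ) + 1 / (n : ℝ)) Filter.atTop :=
        Filter.limsup_le_limsup hle hcob hbdd
    _ = 1 / k := hgl
end

section
/- Let k ≥ 2 and A ⊆ ℕ with r_{1,k}(A,n) = r_{1,k}(ℕ∖A,n) for all sufficiently large n. Then r_{1,k}(A,n) → ∞ as n → ∞. -/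
/-!
Writing `r(A, n)` as a count over `y ≤ n / k` and applying inclusion–exclusion, the identity
`r(A, n) = r(Aᶜ, n)` at `n` and at `n + k` forces `x ∈ A ↔ x / k ∉ A` for all large `x`. Then,
with `n = k q + b`, `r(A, n)` is at least the number of `y ≤ q` with `y ∈ A` and `q - y ∉ A`.

Such an `A` must have a change point `u` (`u ∈ A ↔ u + 1 ∉ A`), and at every scale `i` the blocks
`[k^i u, k^i (u+1))` and `[k^i (u+1), k^i (u+2))` are each monochromatic, of opposite colours. If
the reflection `y ↦ q - y` preserves membership in `A` on both blocks, it carries their boundary to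
a change point in `[q/2, q]`. But a change point `m ≥ k^j M` has `k^j ∣ m + 1`, so `[X, 2X]`
contains at most `2 k M` change points; hence all but boundedly many scales contribute a point
`y` with `y ∈ A`, `q - y ∉ A`, and the number of available scales grows like `log q`.
-/

open Finset Function Filter

section

open scoped Classical

theorem weightedRep_eq_card (A : Set ℕ) {k : ℕ} (hk : 0 < k) (n : ℕ) :
    weightedRep A k n = #{y ∈ range (n / k + 1) | n - k * y ∈ A ∧ y ∈ A} := by
  have hinj : Set.InjOn Prod.snd {p : ℕ × ℕ | p.1 ∈ A ∧ p.2 ∈ A ∧ n = p.1 + k * p.2} := by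
    rintro ⟨a, b⟩ ⟨-, -, hab⟩ ⟨a', b'⟩ ⟨-, -, hab'⟩ (rfl : b = b')
    simp only [Prod.mk.injEq, and_true] at hab hab' ⊢
    omega
  rw [weightedRep, ← hinj.ncard_image, ← Set.ncard_coe_finset]
  congr 1
  ext y
  simp only [Set.mem_image, Set.mem_ofPred_eq, Prod.exists, exists_eq_right, coe_filter,
    mem_range, Nat.lt_succ_iff, Nat.le_div_iff_mul_le hk]
  constructor
  · rintro ⟨a, ha, hy, rfl⟩
    refine ⟨by linarith, by simpa using ha, hy⟩
  · rintro ⟨hyn, ha, hy⟩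
    exact ⟨n - k * y, ha, hy, by rw [mul_comm] at hyn; omega⟩

theorem weightedRep_add_card_range (A : Set ℕ) {k : ℕ} (hk : 0 < k) (n : ℕ) :
    weightedRep A k n + (n / k + 1) = weightedRep Aᶜ k n
      + #{y ∈ range (n / k + 1) | n - k * y ∈ A} + #{y ∈ range (n / k + 1) | y ∈ A} := by
  set R := range (n / k + 1)
  have hcompl : weightedRep Aᶜ k n + #{y ∈ R | n - k * y ∈ A ∨ y ∈ A} = #R := by
    rw [weightedRep_eq_card _ hk, add_comm]
    simpa only [Set.mem_compl_iff, not_or] using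
      card_filter_add_card_filter_not (s := R) (fun y => n - k * y ∈ A ∨ y ∈ A)
  have := card_union_add_card_inter {y ∈ R | n - k * y ∈ A} {y ∈ R | y ∈ A}
  rw [← filter_or, ← filter_and, ← weightedRep_eq_card _ hk] at this
  rw [card_range] at hcompl
  omega

theorem card_filter_add_sub_mul_mem (A : Set ℕ) {k : ℕ} (hk : 0 < k) (n : ℕ) :
    #{y ∈ range ((n + k) / k + 1) | n + k - k * y ∈ A}
      = #{y ∈ range (n / k + 1) | n - k * y ∈ A} + if n + k ∈ A then 1 else 0 := by
  rw [Nat.add_div_right n hk, card_filter, card_filter, sum_range_succ']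
  simp [mul_add, Nat.add_sub_add_right]

def window (k u i : ℕ) : Finset ℕ := Ico (k ^ i * u) (k ^ i * (u + 2))

theorem pairwise_disjoint_window {k u : ℕ} (hk : 2 ≤ k) (hu : 2 ≤ u) :
    Pairwise (Disjoint on window k u) := by
  have key : ∀ i i', i < i' → Disjoint (window k u i) (window k u i') := by
    intro i i' hii'
    have : k ^ i * (u + 2) ≤ k ^ i' * u :=
      calc k ^ i * (u + 2) ≤ k ^ i * (k * u) := Nat.mul_le_mul_left _ (by nlinarith)
        _ = k ^ (i + 1) * u := by ring
        _ ≤ k ^ i' * u := Nat.mul_le_mul_right _ (Nat.pow_le_pow_right (by omega) hii')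
    rw [window, window, disjoint_left]
    simp only [mem_Ico]
    omega
  intro i i' hne
  rcases lt_or_gt_of_ne hne with h | h
  · exact key i i' h
  · exact (key i' i h).symm

theorem card_filter_exists_mismatch_le {A : Set ℕ} {k M u q s : ℕ} (hk : 2 ≤ k) (hu2 : 2 ≤ u)
    (hu : M ≤ u) (hq : 2 * (k ^ s * (u + 2)) ≤ q) :
    #{i ∈ range s | ∃ y ∈ window k u i, ¬(y ∈ A ↔ q - y ∈ A)}
      ≤ #{y ∈ range q | 2 * y < q ∧ M ≤ y ∧ ¬(y ∈ A ↔ q - y ∈ A)} := by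
  refine (card_le_card_biUnion (f := fun i => {y ∈ window k u i | ¬(y ∈ A ↔ q - y ∈ A)})
    (fun i _ j _ hij => (pairwise_disjoint_window hk hu2 hij).mono (filter_subset _ _)
      (filter_subset _ _)) ?_).trans (card_le_card ?_)
  · intro i hi
    simpa only [mem_filter, filter_nonempty_iff] using (mem_filter.1 hi).2
  · intro y hy
    simp only [mem_biUnion, mem_filter, mem_range, window, mem_Ico] at hy ⊢
    obtain ⟨i, hi, ⟨hlo, hhi⟩, hmis⟩ := hy
    have : k ^ i * (u + 2) ≤ k ^ s * (u + 2) :=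
      Nat.mul_le_mul_right _ (Nat.pow_le_pow_right (by omega) hi.1.le)
    have : u ≤ k ^ i * u := Nat.le_mul_of_pos_left u (pow_pos (by omega) i)
    exact ⟨by omega, by omega, by omega, hmis⟩

theorem card_mismatch_le_card_reflect (A : Set ℕ) (M q : ℕ) :
    #{y ∈ range q | 2 * y < q ∧ M ≤ y ∧ ¬(y ∈ A ↔ q - y ∈ A)}
      ≤ #{y ∈ range (q + 1) | y ∈ A ∧ q - y ∉ A ∧ M ≤ q - y} := by
  refine card_le_card_of_injOn (fun y => if y ∈ A then y else q - y) (fun y hy => ?_) ?_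
  · simp only [coe_filter, mem_range, Set.mem_ofPred_eq] at hy ⊢
    by_cases hyA : y ∈ A
    · rw [if_pos hyA]
      exact ⟨by omega, hyA, by tauto, by omega⟩
    · rw [if_neg hyA, Nat.sub_sub_self (by omega : y ≤ q)]
      exact ⟨by omega, by tauto, hyA, hy.2.2.1⟩
  · intro y hy y' hy' h
    simp only [coe_filter, mem_range, Set.mem_ofPred_eq] at hy hy' h
    split_ifs at h <;> omega

def FlipsUnderDiv (A : Set ℕ) (k M : ℕ) : Prop :=
  ∀ x, M ≤ x → (x ∈ A ↔ x / k ∉ A)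

theorem flipsUnderDiv_of_weightedRep_eq {A : Set ℕ} {k N : ℕ} (hk : 0 < k)
    (h : ∀ n, N ≤ n → weightedRep A k n = weightedRep Aᶜ k n) : FlipsUnderDiv A k (N + k) := by
  intro x hx
  obtain ⟨n, rfl⟩ : ∃ n, x = n + k := ⟨x - k, by omega⟩
  have hU : #{y ∈ range ((n + k) / k + 1) | y ∈ A}
      = #{y ∈ range (n / k + 1) | y ∈ A} + if n / k + 1 ∈ A then 1 else 0 := by
    rw [Nat.add_div_right n hk, card_filter, card_filter, sum_range_succ]
  have hn := weightedRep_add_card_range A hk n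
  have hnk := weightedRep_add_card_range A hk (n + k)
  rw [card_filter_add_sub_mul_mem A hk, hU, h (n + k) (by omega), Nat.add_div_right n hk] at hnk
  rw [h n (by omega)] at hn
  rw [Nat.add_div_right n hk]
  by_cases hx : n + k ∈ A <;> by_cases hq : n / k + 1 ∈ A <;> simp only [hx, hq, if_true,
    if_false, not_true, not_false_iff] at hnk ⊢ <;> omega

namespace FlipsUnderDiv

variable {A : Set ℕ} {k M : ℕ}

theorem mul_add_mem_iff (hA : FlipsUnderDiv A k M) (hk : 0 < k) {u b : ℕ} (hu : M ≤ u)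
    (hb : b < k) : k * u + b ∈ A ↔ u ∉ A := by
  have hdiv : (k * u + b) / k = u := by
    rw [Nat.mul_add_div hk, Nat.div_eq_of_lt hb, add_zero]
  have := hA (k * u + b) (hu.trans (Nat.le_add_right_of_le (Nat.le_mul_of_pos_left u hk)))
  rwa [hdiv] at this

theorem pow_mul_add_mem_iff (hA : FlipsUnderDiv A k M) (hk : 0 < k) {u : ℕ} (hu : M ≤ u) :
    ∀ {i b : ℕ}, b < k ^ i → (k ^ i * u + b ∈ A ↔ (u ∈ A ↔ Even i))
  | 0, b, hb => by simp_all
  | i + 1, b, hb => by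
    have hb' : b / k < k ^ i := Nat.div_lt_of_lt_mul (by rwa [mul_comm, ← pow_succ])
    have hsplit : k ^ (i + 1) * u + b = k * (k ^ i * u + b / k) + b % k := by
      rw [mul_add, ← mul_assoc, ← pow_succ', add_assoc, Nat.div_add_mod]
    rw [hsplit, hA.mul_add_mem_iff hk (hu.trans (Nat.le_add_right_of_le
      (Nat.le_mul_of_pos_left u (pow_pos hk i)))) (Nat.mod_lt b hk),
      pow_mul_add_mem_iff hA hk hu hb', Nat.even_add_one]
    tauto

theorem exists_succ_eq_mul_of_change (hA : FlipsUnderDiv A k M) {m : ℕ}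
    (hm : M ≤ m) (h : ¬(m + 1 ∈ A ↔ m ∈ A)) :
    ∃ m', m + 1 = k * (m' + 1) ∧ ¬(m' + 1 ∈ A ↔ m' ∈ A) := by
  have hdvd : k ∣ m + 1 := by
    by_contra hndvd
    rw [hA (m + 1) (by omega), hA m hm, Nat.succ_div_of_not_dvd hndvd] at h
    exact h Iff.rfl
  refine ⟨m / k, ?_, ?_⟩
  · rw [← Nat.succ_div_of_dvd hdvd, Nat.mul_div_cancel' hdvd]
  · rwa [hA (m + 1) (by omega), hA m hm, Nat.succ_div_of_dvd hdvd, not_iff_not] at h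

theorem exists_succ_eq_pow_mul_of_change (hA : FlipsUnderDiv A k M) (hk : 0 < k) :
    ∀ {j m : ℕ}, k ^ j * M ≤ m → ¬(m + 1 ∈ A ↔ m ∈ A) →
      ∃ m', m + 1 = k ^ j * (m' + 1) ∧ ¬(m' + 1 ∈ A ↔ m' ∈ A)
  | 0, m, _, h => ⟨m, by simp, h⟩
  | j + 1, m, hm, h => by
    have hkM : M ≤ m := le_trans (Nat.le_mul_of_pos_left M (pow_pos hk _)) hm
    obtain ⟨m₁, hm₁, h₁⟩ := hA.exists_succ_eq_mul_of_change hkM h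
    have : k ^ j * M ≤ m₁ := by
      have : k * (k ^ j * M) < k * (m₁ + 1) := by rw [← hm₁, ← mul_assoc, ← pow_succ']; omega
      have := lt_of_mul_lt_mul_left this (Nat.zero_le k)
      omega
    obtain ⟨m', hm', h'⟩ := exists_succ_eq_pow_mul_of_change hA hk this h₁
    exact ⟨m', by rw [hm₁, hm', pow_succ', mul_assoc], h'⟩

theorem exists_change (hA : FlipsUnderDiv A k M) (hk : 0 < k) :
    ∃ u, M ≤ u ∧ ¬(u + 1 ∈ A ↔ u ∈ A) := by
  by_contra! hconst
  have hM : ∀ u, M ≤ u → (u ∈ A ↔ M ∈ A) :=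
    Nat.le_induction Iff.rfl fun u hu ih => (hconst u hu).trans ih
  have hkM := hA (k * M) (Nat.le_mul_of_pos_left M hk)
  rw [Nat.mul_div_cancel_left M hk, hM _ (Nat.le_mul_of_pos_left M hk)] at hkM
  exact iff_not_self hkM

theorem card_changes_le (hA : FlipsUnderDiv A k M) (hk : 1 < k) (hM : 0 < M) {X : ℕ}
    (hX : M ≤ X) : #{m ∈ Icc X (2 * X) | ¬(m + 1 ∈ A ↔ m ∈ A)} ≤ 2 * k * M := by
  set j := Nat.log k (X / M)
  have hjX : k ^ j * M ≤ X :=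
    (Nat.le_div_iff_mul_le hM).1 (Nat.pow_log_le_self k (Nat.div_pos hX hM).ne')
  have hXj : X < k ^ (j + 1) * M := (Nat.div_lt_iff_lt_mul hM).1 (Nat.lt_pow_succ_log_self hk _)
  have hdvd : ∀ m ∈ ({m ∈ Icc X (2 * X) | ¬(m + 1 ∈ A ↔ m ∈ A)} : Finset ℕ),
      ∃ m', m + 1 = k ^ j * (m' + 1) := fun m hm => by
    simp only [mem_filter, mem_Icc] at hm
    obtain ⟨m', hm', -⟩ := hA.exists_succ_eq_pow_mul_of_change (by omega) (hjX.trans hm.1.1) hm.2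
    exact ⟨m', hm'⟩
  calc _ ≤ #(range (2 * k * M)) := by
        refine card_le_card_of_injOn (fun m => (m + 1) / k ^ j) (fun m hm => ?_) ?_
        · obtain ⟨m', hm'⟩ := hdvd m hm
          simp only [coe_filter, mem_Icc, Set.mem_ofPred_eq] at hm
          have : k ^ j * (m' + 1) < k ^ j * (2 * k * M) := by
            rw [← hm', show k ^ j * (2 * k * M) = 2 * (k ^ (j + 1) * M) by ring]
            omega
          simpa [hm', Nat.mul_div_cancel_left _ (pow_pos (by omega : 0 < k) j)]
            using lt_of_mul_lt_mul_left this (Nat.zero_le _)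
        · intro m hm m₂ hm₂ h
          obtain ⟨m', hm'⟩ := hdvd m hm
          obtain ⟨m₂', hm₂'⟩ := hdvd m₂ hm₂
          have := (Nat.div_left_inj ⟨_, hm'⟩ ⟨_, hm₂'⟩).1 h
          omega
    _ = 2 * k * M := card_range _

theorem change_of_forall_mem_window_iff (hA : FlipsUnderDiv A k M) (hk : 0 < k) {u q i : ℕ}
    (hu : M ≤ u) (hch : ¬(u + 1 ∈ A ↔ u ∈ A)) (hq : k ^ i * (u + 1) ≤ q)
    (h : ∀ y ∈ window k u i, (y ∈ A ↔ q - y ∈ A)) :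
    ¬(q - k ^ i * (u + 1) + 1 ∈ A ↔ q - k ^ i * (u + 1) ∈ A) := by
  have hpos : 0 < k ^ i := pow_pos hk i
  have e₁ : k ^ i * (u + 1) = k ^ i * u + k ^ i := by ring
  have e₂ : k ^ i * (u + 2) = k ^ i * u + k ^ i + k ^ i := by ring
  have hlast := hA.pow_mul_add_mem_iff hk hu (Nat.sub_lt hpos one_pos)
  have hfirst := hA.pow_mul_add_mem_iff hk (hu.trans u.le_succ) hpos
  rw [add_zero] at hfirst
  have hmem : ∀ y, k ^ i * u ≤ y → y < k ^ i * (u + 2) → y ∈ window k u i :=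
    fun y h₁ h₂ => mem_Ico.2 ⟨h₁, h₂⟩
  rw [show q - k ^ i * (u + 1) + 1 = q - (k ^ i * u + (k ^ i - 1)) by omega,
    ← h _ (hmem _ (by omega) (by omega)), ← h _ (hmem _ (by omega) (by omega)), hlast, hfirst]
  tauto

theorem card_filter_forall_mem_window_iff_le (hA : FlipsUnderDiv A k M) (hk : 1 < k)
    (hM : 0 < M) {u q s : ℕ} (hu : M ≤ u) (hch : ¬(u + 1 ∈ A ↔ u ∈ A))
    (hq : 2 * (k ^ s * (u + 2)) ≤ q) :
    #{i ∈ range s | ∀ y ∈ window k u i, (y ∈ A ↔ q - y ∈ A)} ≤ 2 * k * M := by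
  have hbound : ∀ i < s, 2 * (k ^ i * (u + 1)) + 2 ≤ q := fun i hi => by
    have : k ^ i * (u + 2) ≤ k ^ s * (u + 2) :=
      Nat.mul_le_mul_right _ (Nat.pow_le_pow_right (by omega) hi.le)
    have : k ^ i * (u + 2) = k ^ i * (u + 1) + k ^ i := by ring
    have := pow_pos (by omega : 0 < k) i
    omega
  refine le_trans (card_le_card_of_injOn (fun i => q - k ^ i * (u + 1)) (fun i hi => ?_) ?_)
    (hA.card_changes_le hk hM (X := q / 2) ?_)
  · simp only [coe_filter, mem_range, Set.mem_ofPred_eq, mem_Icc] at hi ⊢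
    have := hbound i hi.1
    have : 0 < k ^ i * (u + 1) := Nat.mul_pos (pow_pos (by omega) i) u.succ_pos
    exact ⟨⟨by omega, by omega⟩,
      hA.change_of_forall_mem_window_iff (by omega) hu hch (by omega) hi.2⟩
  · intro i hi i' hi' h
    simp only [coe_filter, mem_range, Set.mem_ofPred_eq] at hi hi' h
    have := hbound i hi.1
    have := hbound i' hi'.1
    have h' : k ^ i * (u + 1) = k ^ i' * (u + 1) := by omega
    exact Nat.pow_right_injective hk (Nat.eq_of_mul_eq_mul_right u.succ_pos h')
  · have := Nat.le_mul_of_pos_left (u + 2) (pow_pos (by omega : 0 < k) s)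
    omega

theorem tendsto_card_reflect (hA : FlipsUnderDiv A k M) (hk : 2 ≤ k) (hM : 2 ≤ M) :
    Tendsto (fun q => #{y ∈ range (q + 1) | y ∈ A ∧ q - y ∉ A ∧ M ≤ q - y}) atTop atTop := by
  obtain ⟨u, hu, hch⟩ := hA.exists_change (by omega)
  refine tendsto_atTop.2 fun L => ?_
  set s := L + 2 * k * M
  filter_upwards [eventually_ge_atTop (2 * (k ^ s * (u + 2)))] with q hq
  have hsplit := card_filter_add_card_filter_not (s := range s)
    (fun i => ∃ y ∈ window k u i, ¬(y ∈ A ↔ q - y ∈ A))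
  simp only [not_exists, not_and, not_not, card_range] at hsplit
  have hbad := hA.card_filter_forall_mem_window_iff_le (by omega) (by omega) hu hch hq
  have hgood := card_filter_exists_mismatch_le (A := A) hk (by omega) hu hq
  have := card_mismatch_le_card_reflect A M q
  omega

theorem card_reflect_le_weightedRep (hA : FlipsUnderDiv A k M) (hk : 0 < k) (n : ℕ) :
    #{y ∈ range (n / k + 1) | y ∈ A ∧ n / k - y ∉ A ∧ M ≤ n / k - y} ≤ weightedRep A k n := by
  rw [weightedRep_eq_card A hk]
  refine card_le_card fun y hy => ?_
  simp only [mem_filter, mem_range] at hy ⊢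
  obtain ⟨hy, hyA, hqy, hMy⟩ := hy
  have : n - k * y = k * (n / k - y) + n % k := by
    have := Nat.div_add_mod n k
    have := Nat.mul_le_mul_left k (show y ≤ n / k by omega)
    rw [Nat.mul_sub]
    omega
  rw [this, hA.mul_add_mem_iff hk hMy (Nat.mod_lt n hk)]
  exact ⟨hy, hqy, hyA⟩

end FlipsUnderDiv

end

theorem stmt_3 (k : ℕ) (hk : 2 ≤ k) (A : Set ℕ)
    (hA : ∀ᶠ n in Filter.atTop, weightedRep A k n = weightedRep Aᶜ k n) :
    Filter.Tendsto (fun n : ℕ => weightedRep A k n) Filter.atTop Filter.atTop := by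
  obtain ⟨N, hN⟩ := eventually_atTop.1 hA
  have hflip : FlipsUnderDiv A k (N + k) := flipsUnderDiv_of_weightedRep_eq (by omega) hN
  exact tendsto_atTop_mono (hflip.card_reflect_le_weightedRep (by omega))
    ((hflip.tendsto_card_reflect hk (by omega)).comp (Nat.tendsto_div_const_atTop (by omega)))
end

section
/- Let k ≥ 2 be an integer and suppose A ⊆ ℕ can be written as the union of intervals A = ⋃_{i=0}^∞ [t_{2i}, t_{2i+1}) for a strictly increasing sequence of nonnegative integers 0 ≤ t₀ < t₁ < t₂ < ⋯, and suppose r_{1,k}(A,n) = r_{1,k}(ℕ∖A,n) for all sufficiently large n. Then there exist an odd positive integer a and a nonnegative integer i₀ such that t_{i+a} = k·t_i for all i ≥ i₀. -/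
noncomputable def Jf (t : ℕ → ℕ) (n : ℕ) : ℕ := sInf {j | n < t j}

variable {t : ℕ → ℕ}

lemma Jf_spec (ht : StrictMono t) (n : ℕ) : n < t (Jf t n) := by
  have hne : {j | n < t j}.Nonempty :=
    ⟨n + 1, by simpa using lt_of_lt_of_le (Nat.lt_succ_self n) ht.le_apply⟩
  exact Nat.sInf_mem hne

lemma lt_Jf_iff (ht : StrictMono t) {j n : ℕ} : j < Jf t n ↔ t j ≤ n := by
  constructor
  · intro h
    have := Nat.notMem_of_lt_sInf h
    simpa using this
  · intro h
    by_contra hc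
    push_neg at hc
    exact absurd (lt_of_lt_of_le (Jf_spec ht n) (ht.monotone hc)) (not_lt.mpr h)

lemma Jf_le_iff (ht : StrictMono t) {j n : ℕ} : Jf t n ≤ j ↔ n < t j := by
  rw [← not_lt, lt_Jf_iff ht, not_le]

lemma Jf_mono (ht : StrictMono t) : Monotone (Jf t) := by
  intro a b hab
  by_contra hc
  push_neg at hc
  have := (lt_Jf_iff ht).mp hc
  exact absurd (lt_of_le_of_lt this (lt_of_le_of_lt hab (Jf_spec ht b))) (lt_irrefl _)

lemma Jf_succ_le (ht : StrictMono t) (n : ℕ) : Jf t (n + 1) ≤ Jf t n + 1 := by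
  rw [Jf_le_iff ht]
  have h1 : n < t (Jf t n) := Jf_spec ht n
  have h2 : t (Jf t n) < t (Jf t n + 1) := ht (Nat.lt_succ_self _)
  omega

lemma eq_of_Jf_succ (ht : StrictMono t) {n : ℕ} (h : Jf t (n + 1) = Jf t n + 1) :
    t (Jf t n) = n + 1 := by
  have h1 : t (Jf t n) ≤ n + 1 := (lt_Jf_iff ht).mp (by omega)
  have h2 : n < t (Jf t n) := Jf_spec ht n
  omega

lemma Jf_succ_of_eq (ht : StrictMono t) {n j : ℕ} (h : t j = n + 1) :
    Jf t (n + 1) = Jf t n + 1 ∧ j = Jf t n := by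
  have h1 : j < Jf t (n + 1) := (lt_Jf_iff ht).mpr (le_of_eq h)
  have h2 : Jf t n ≤ j := (Jf_le_iff ht).mpr (by omega)
  have h3 := Jf_succ_le ht n
  omega

-- membership
lemma mem_iff_odd (ht : StrictMono t) (A : Set ℕ)
    (hAt : A = ⋃ i : ℕ, Set.Ico (t (2 * i)) (t (2 * i + 1))) (n : ℕ) :
    n ∈ A ↔ Odd (Jf t n) := by
  subst hAt
  simp only [Set.mem_iUnion, Set.mem_Ico]
  constructor
  · rintro ⟨i, h1, h2⟩
    have ha : 2 * i < Jf t n := (lt_Jf_iff ht).mpr h1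
    have hb : Jf t n ≤ 2 * i + 1 := (Jf_le_iff ht).mpr h2
    have : Jf t n = 2 * i + 1 := by omega
    exact ⟨i, by omega⟩
  · rintro ⟨i, hi⟩
    refine ⟨i, (lt_Jf_iff ht).mp (by omega), ?_⟩
    have := Jf_spec ht n
    have : Jf t n = 2 * i + 1 := by omega
    rwa [← this]


open Classical in
lemma weightedRep_eq (A : Set ℕ) (k n : ℕ) (hk : 0 < k) :
    weightedRep A k n
      = ((Finset.range (n / k + 1)).filter (fun m => m ∈ A ∧ (n - k * m) ∈ A)).card := by
  classical
  unfold weightedRep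
  have hset : {p : ℕ × ℕ | p.1 ∈ A ∧ p.2 ∈ A ∧ n = p.1 + k * p.2}
      = ↑(((Finset.range (n / k + 1)).filter (fun m => m ∈ A ∧ (n - k * m) ∈ A)).image
          (fun m => (n - k * m, m))) := by
    ext p
    simp only [Set.mem_setOf_eq, Finset.coe_image, Set.mem_image, Finset.mem_coe,
      Finset.mem_filter, Finset.mem_range]
    constructor
    · rintro ⟨h1, h2, h3⟩
      refine ⟨p.2, ⟨?_, h2, ?_⟩, ?_⟩
      · have : k * p.2 ≤ n := by omega
        have h2 := Nat.le_div_iff_mul_le hk |>.mpr (by rw [mul_comm]; omega : p.2 * k ≤ n)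
        omega
      · have : n - k * p.2 = p.1 := by omega
        rwa [this]
      · have : n - k * p.2 = p.1 := by omega
        rw [this]
    · rintro ⟨m, ⟨hm, hmA, hmA'⟩, rfl⟩
      have hkm : k * m ≤ n := by
        have h2 := Nat.le_div_iff_mul_le hk |>.mp (by omega : m ≤ n / k)
        rw [mul_comm] at h2
        exact h2
      exact ⟨hmA', hmA, by show n = n - k * m + k * m; omega⟩
  rw [hset, Set.ncard_coe_finset, Finset.card_image_of_injOn]
  intro a _ b _ hab
  simpa using congrArg Prod.snd hab


open Classical in
noncomputable def indi (A : Set ℕ) (x : ℕ) : ℤ := if x ∈ A then 1 else 0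

lemma indi_compl (A : Set ℕ) (x : ℕ) : indi Aᶜ x = 1 - indi A x := by
  unfold indi
  by_cases h : x ∈ A <;> simp [h]

lemma weightedRep_sum (A : Set ℕ) (k n : ℕ) (hk : 0 < k) :
    (weightedRep A k n : ℤ)
      = ∑ m ∈ Finset.range (n / k + 1), indi A m * indi A (n - k * m) := by
  classical
  rw [weightedRep_eq A k n hk, Finset.card_filter]
  push_cast
  refine Finset.sum_congr rfl fun m _ => ?_
  unfold indi
  split_ifs <;> simp_all

lemma sum_ind (A : Set ℕ) (k n : ℕ) (hk : 0 < k)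
    (h : weightedRep A k n = weightedRep Aᶜ k n) :
    ∑ m ∈ Finset.range (n / k + 1), (indi A m + indi A (n - k * m))
      = (n / k : ℕ) + 1 := by
  have h' : (weightedRep A k n : ℤ) = (weightedRep Aᶜ k n : ℤ) := by exact_mod_cast h
  rw [weightedRep_sum A k n hk, weightedRep_sum Aᶜ k n hk] at h'
  have key : ∑ m ∈ Finset.range (n / k + 1),
      (indi A m * indi A (n - k * m) - indi Aᶜ m * indi Aᶜ (n - k * m))
      = ∑ m ∈ Finset.range (n / k + 1), (indi A m + indi A (n - k * m) - 1) := by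
    refine Finset.sum_congr rfl fun m _ => ?_
    rw [indi_compl, indi_compl]
    ring
  rw [Finset.sum_sub_distrib, h', sub_self] at key
  rw [eq_comm, Finset.sum_sub_distrib, Finset.sum_const, Finset.card_range,
    nsmul_eq_mul, mul_one, sub_eq_zero] at key
  rw [key]
  push_cast
  ring

lemma mem_xor (A : Set ℕ) (k N : ℕ) (hk : 0 < k)
    (hN : ∀ n ≥ N, weightedRep A k n = weightedRep Aᶜ k n) :
    ∀ m ≥ N + k, (m ∈ A ↔ (m / k) ∉ A) := by
  intro m hm
  obtain ⟨n, rfl⟩ : ∃ n, m = n + k := ⟨m - k, by omega⟩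
  have hdiv : (n + k) / k = n / k + 1 := Nat.add_div_right n hk
  have h1 := sum_ind A k n hk (hN n (by omega))
  have h2 := sum_ind A k (n + k) hk (hN (n + k) (by omega))
  rw [hdiv] at h2
  have hsplit2 : ∑ m ∈ Finset.range (n / k + 1 + 1), (indi A m + indi A (n + k - k * m))
      = (∑ m ∈ Finset.range (n / k + 1), (indi A m + indi A (n - k * m)))
        + indi A (n / k + 1) + indi A (n + k) := by
    rw [Finset.sum_add_distrib, Finset.sum_add_distrib]
    rw [Finset.sum_range_succ (fun m => indi A m)]
    rw [Finset.sum_range_succ' (fun m => indi A (n + k - k * m))]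
    have hre : ∀ m, n + k - k * (m + 1) = n - k * m := by
      intro m
      have : k * (m + 1) = k * m + k := by ring
      omega
    simp only [hre, Nat.mul_zero, Nat.sub_zero]
    ring
  rw [hsplit2, h1] at h2
  have hkey : indi A (n / k + 1) + indi A (n + k) = 1 := by push_cast at h2 ⊢; linarith
  unfold indi at hkey
  rw [hdiv]
  split_ifs at hkey <;> simp_all


theorem stmt_6 (k : ℕ) (hk : 2 ≤ k) (t : ℕ → ℕ) (ht : StrictMono t) (A : Set ℕ)
    (hAt : A = ⋃ i : ℕ, Set.Ico (t (2 * i)) (t (2 * i + 1)))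
    (hA : ∀ᶠ n in Filter.atTop, weightedRep A k n = weightedRep Aᶜ k n) :
    ∃ a : ℕ, Odd a ∧ 0 < a ∧ ∃ i₀ : ℕ, ∀ i ≥ i₀, t (i + a) = k * t i := by
  have hk0 : 0 < k := by omega
  obtain ⟨N, hN⟩ := Filter.eventually_atTop.mp hA
  have hxor := mem_xor A k N hk0 hN
  set M := N + k with hM
  have hodd : ∀ m ≥ M, (Jf t m + Jf t (m / k)) % 2 = 1 := by
    intro m hm
    have h := hxor m hm
    rw [mem_iff_odd ht A hAt, mem_iff_odd ht A hAt] at h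
    rw [Nat.odd_iff, Nat.odd_iff] at h
    omega
  -- forward direction
  have F : ∀ x j, M + 1 ≤ x → t j = x →
      ∃ j', k ∣ x ∧ t j' = x / k ∧ Odd (j + j') := by
    intro x j hx htj
    obtain ⟨n, rfl⟩ : ∃ n, x = n + 1 := ⟨x - 1, by omega⟩
    obtain ⟨hJs, hjJ⟩ := Jf_succ_of_eq ht htj
    have hOx := hodd (n + 1) (by omega)
    have hOn := hodd n (by omega)
    by_cases hd : k ∣ n + 1
    · -- q = (n+1)/k ≥ 1
      obtain ⟨q', hq'⟩ : ∃ q', (n + 1) / k = q' + 1 := by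
        have h1 : k ≤ n + 1 := Nat.le_of_dvd (by omega) hd
        have h2 : 1 ≤ (n + 1) / k := (Nat.one_le_div_iff hk0).mpr h1
        exact ⟨(n + 1) / k - 1, by omega⟩
      have hkq : n + 1 = k * (q' + 1) := (Nat.mul_div_cancel' hd).symm.trans (by rw [hq'])
      have hn : n = k * q' + (k - 1) := by
        have : k * (q' + 1) = k * q' + k := by ring
        omega
      have hnk : n / k = q' := by
        rw [hn, Nat.mul_add_div hk0, Nat.div_eq_of_lt (by omega)]
        omega
      rw [hq'] at hOx
      rw [hnk] at hOn
      -- J (q'+1) = J q' + 1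
      have hle := Jf_succ_le ht q'
      have hge := Jf_mono ht (by omega : q' ≤ q' + 1)
      have hJq : Jf t (q' + 1) = Jf t q' + 1 := by omega
      have htq := eq_of_Jf_succ ht hJq
      refine ⟨Jf t q', hd, by rw [hq']; exact htq, ?_⟩
      rw [Nat.odd_iff]
      omega
    · exfalso
      have : (n + 1) / k = n / k := by
        rw [Nat.succ_div, if_neg hd]
        omega
      rw [this] at hOx
      omega
  -- backward direction
  have B : ∀ x i, M + 1 ≤ x → k ∣ x → t i = x / k →
      ∃ j, t j = x ∧ Odd (i + j) := by
    intro x i hx hd hti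
    obtain ⟨n, rfl⟩ : ∃ n, x = n + 1 := ⟨x - 1, by omega⟩
    have hOx := hodd (n + 1) (by omega)
    have hOn := hodd n (by omega)
    obtain ⟨q', hq'⟩ : ∃ q', (n + 1) / k = q' + 1 := by
      have h1 : k ≤ n + 1 := Nat.le_of_dvd (by omega) hd
      have h2 : 1 ≤ (n + 1) / k := (Nat.one_le_div_iff hk0).mpr h1
      exact ⟨(n + 1) / k - 1, by omega⟩
    have hkq : n + 1 = k * (q' + 1) := (Nat.mul_div_cancel' hd).symm.trans (by rw [hq'])
    have hn : n = k * q' + (k - 1) := by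
      have : k * (q' + 1) = k * q' + k := by ring
      omega
    have hnk : n / k = q' := by
      rw [hn, Nat.mul_add_div hk0, Nat.div_eq_of_lt (by omega)]
      omega
    rw [hq'] at hOx hti
    rw [hnk] at hOn
    obtain ⟨hJq, hiJ⟩ := Jf_succ_of_eq ht hti
    have hle := Jf_succ_le ht n
    have hge := Jf_mono ht (by omega : n ≤ n + 1)
    have hJx : Jf t (n + 1) = Jf t n + 1 := by omega
    refine ⟨Jf t n, eq_of_Jf_succ ht hJx, ?_⟩
    rw [Nat.odd_iff]
    omega
  -- set up i₀
  set i₀ := M + 1 with hi₀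
  have hti : ∀ i, i₀ ≤ i → M + 1 ≤ t i := fun i hi =>
    le_trans hi (le_trans ht.le_apply le_rfl)
  have hB' : ∀ i, i₀ ≤ i → ∃ j, t j = k * t i ∧ Odd (i + j) := by
    intro i hi
    have h1 : M + 1 ≤ t i := hti i hi
    have hx : M + 1 ≤ k * t i := le_trans h1 (Nat.le_mul_of_pos_left _ hk0)
    exact B (k * t i) i hx ⟨t i, rfl⟩ (Nat.mul_div_cancel_left _ hk0).symm
  have hF' : ∀ j, k * t i₀ ≤ t j → ∃ i, i₀ ≤ i ∧ t j = k * t i := by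
    intro j hj
    have hx : M + 1 ≤ t j := by
      have := hti i₀ le_rfl
      have : t i₀ ≤ k * t i₀ := Nat.le_mul_of_pos_left _ hk0
      omega
    obtain ⟨j', hd, htj', _⟩ := F (t j) j hx rfl
    refine ⟨j', ?_, ?_⟩
    · -- t j' = t j / k ≥ t i₀
      have h1 : t i₀ ≤ t j / k := by
        have h2 := Nat.div_le_div_right (c := k) hj
        rwa [Nat.mul_div_cancel_left _ hk0] at h2
      rw [← htj'] at h1
      exact (ht.le_iff_le).mp h1
    · rw [htj', Nat.mul_div_cancel' hd]
  -- base
  obtain ⟨j₀, hj₀, hoddj₀⟩ := hB' i₀ le_rfl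
  have hj₀gt : i₀ < j₀ := by
    have h1 : t i₀ < k * t i₀ := by
      have h2 : 1 ≤ t i₀ := by have := hti i₀ le_rfl; omega
      calc t i₀ = 1 * t i₀ := (one_mul _).symm
      _ < k * t i₀ := mul_lt_mul_of_pos_right (by omega) (by omega)
    have : t i₀ < t j₀ := by omega
    exact ht.lt_iff_lt.mp this
  refine ⟨j₀ - i₀, ?_, by omega, i₀, ?_⟩
  · rw [Nat.odd_iff] at hoddj₀ ⊢
    omega
  · -- induction
    set a := j₀ - i₀ with ha
    intro i hi
    induction i, hi using Nat.le_induction with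
    | base =>
      have : i₀ + a = j₀ := by omega
      rw [this, hj₀]
    | succ i hi IH =>
      obtain ⟨j, hj, _⟩ := hB' (i + 1) (by omega)
      have hlt1 : t (i + a) < t j := by
        rw [IH, hj]
        exact mul_lt_mul_of_pos_left (ht (Nat.lt_succ_self i)) hk0
      have hju : j = i + a + 1 := by
        by_contra hc
        have hjge : i + a + 1 < j := by
          have := ht.lt_iff_lt.mp hlt1
          omega
        have hm1 : t (i + a + 1) < t j := ht hjge
        have hm2 : t (i + a) < t (i + a + 1) := ht (Nat.lt_succ_self _)
        have hmge : k * t i₀ ≤ t (i + a + 1) := by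
          have h3 : t i₀ ≤ t i := ht.monotone hi
          have h4 : k * t i₀ ≤ k * t i := Nat.mul_le_mul_left k h3
          rw [IH] at hm2
          omega
        obtain ⟨i', hi', hti'⟩ := hF' (i + a + 1) hmge
        rw [IH] at hm2
        rw [hj] at hm1
        rw [hti'] at hm1 hm2
        have h5 : t i < t i' := Nat.lt_of_mul_lt_mul_left hm2
        have h6 : t i' < t (i + 1) := Nat.lt_of_mul_lt_mul_left hm1
        have h7 : i < i' := ht.lt_iff_lt.mp h5
        have h8 : i' < i + 1 := ht.lt_iff_lt.mp h6
        omega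
      have : i + 1 + a = j := by omega
      rw [this, hj]
end

section
/- Let k ≥ 2 be an integer, let g be an odd positive integer, and let s, ℓ be nonnegative integers. Suppose t is a strictly increasing sequence of nonnegative integers and A ⊆ ℕ contains the intervals [k^s t_ℓ, k^s t_{ℓ+1}) and [k^{s+g-1} t_ℓ, k^{s+g-1} t_{ℓ+1}). Let r with 0 ≤ r < k^g + 1 and let m satisfy k^s t_ℓ + k^{s-4} ≤ m < k^s t_{ℓ+1} - k^{s-4}, and set n = (k^g+1)m + r. Then for every integer q with 0 ≤ q < k^{s-5} - r, both m + kq + r ∈ A and k^{g-1}m - q ∈ A, and n = (m + kq + r) + k(k^{g-1}m - q); consequently r_{1,k}(A,n) ≥ k^{s-5} - r. -/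
theorem stmt_7 (k g s ℓ : ℕ) (hk : 2 ≤ k) (hg : Odd g) (hg0 : 0 < g) (hs : 5 ≤ s)
    (t : ℕ → ℕ) (ht : StrictMono t) (A : Set ℕ)
    (hA1 : Set.Ico (k ^ s * t ℓ) (k ^ s * t (ℓ + 1)) ⊆ A)
    (hA2 : Set.Ico (k ^ (s + g - 1) * t ℓ) (k ^ (s + g - 1) * t (ℓ + 1)) ⊆ A)
    (r m n : ℕ) (hr : r < k ^ g + 1)
    (hm1 : k ^ s * t ℓ + k ^ (s - 4) ≤ m) (hm2 : m + k ^ (s - 4) < k ^ s * t (ℓ + 1))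
    (hn : n = (k ^ g + 1) * m + r) :
    (∀ q : ℕ, q < k ^ (s - 5) - r →
      (m + k * q + r ∈ A ∧ k ^ (g - 1) * m - q ∈ A ∧
        n = (m + k * q + r) + k * (k ^ (g - 1) * m - q))) ∧
    k ^ (s - 5) - r ≤ weightedRep A k n := by
  have hk0 : 0 < k := by omega
  have hP4 : k ^ (s - 4) = k * k ^ (s - 5) := by
    rw [← pow_succ']; congr 1; omega
  have hKg : k ^ g = k * k ^ (g - 1) := by
    rw [← pow_succ']; congr 1; omega
  have hSG : k ^ (s + g - 1) = k ^ s * k ^ (g - 1) := by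
    rw [← pow_add]; congr 1; omega
  have hK1 : 1 ≤ k ^ (g - 1) := Nat.one_le_pow _ _ hk0
  have h451 : k ^ (s - 5) ≤ k ^ (s - 4) := Nat.pow_le_pow_right hk0 (by omega)
  have hmlt : m < k ^ s * t (ℓ + 1) := by
    have : 1 ≤ k ^ (s - 4) := Nat.one_le_pow _ _ hk0
    omega
  have key : ∀ q : ℕ, q < k ^ (s - 5) - r →
      (m + k * q + r ∈ A ∧ k ^ (g - 1) * m - q ∈ A ∧
        n = (m + k * q + r) + k * (k ^ (g - 1) * m - q)) := by
    intro q hq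
    have hqr : q + r < k ^ (s - 5) := by omega
    have hkqr : k * q + r < k ^ (s - 4) := by
      have h1 : k * q + r ≤ k * (q + r) := by nlinarith
      have h2 : k * (q + r) < k * k ^ (s - 5) := by nlinarith
      omega
    have hmem1 : m + k * q + r ∈ A := by
      apply hA1
      constructor
      · omega
      · omega
    have hqKm : q ≤ k ^ (g - 1) * m := by
      have : k ^ (s - 4) ≤ m := by omega
      calc q ≤ k ^ (s - 4) := by omega
        _ ≤ m := this
        _ ≤ k ^ (g - 1) * m := Nat.le_mul_of_pos_left m hK1
    have hmem2 : k ^ (g - 1) * m - q ∈ A := by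
      apply hA2
      rw [hSG]
      constructor
      · apply Nat.le_sub_of_add_le
        have h1 : k ^ (g - 1) * (k ^ s * t ℓ + k ^ (s - 4)) ≤ k ^ (g - 1) * m :=
          Nat.mul_le_mul_left _ hm1
        have h2 : q ≤ k ^ (g - 1) * k ^ (s - 4) := by
          calc q ≤ k ^ (s - 4) := by omega
            _ ≤ k ^ (g - 1) * k ^ (s - 4) := Nat.le_mul_of_pos_left _ hK1
        nlinarith
      · calc k ^ (g - 1) * m - q ≤ k ^ (g - 1) * m := Nat.sub_le _ _
          _ < k ^ (g - 1) * (k ^ s * t (ℓ + 1)) := by nlinarith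
          _ = k ^ s * k ^ (g - 1) * t (ℓ + 1) := by ring
    refine ⟨hmem1, hmem2, ?_⟩
    have heq : k * (q + (k ^ (g - 1) * m - q)) = k ^ g * m := by
      rw [Nat.add_sub_cancel' hqKm, hKg]; ring
    calc n = k ^ g * m + m + r := by rw [hn]; ring
      _ = (m + k * q + r) + k * (k ^ (g - 1) * m - q) := by
          rw [← heq]; ring
  refine ⟨key, ?_⟩
  set S : Set (ℕ × ℕ) := {p : ℕ × ℕ | p.1 ∈ A ∧ p.2 ∈ A ∧ n = p.1 + k * p.2} with hS
  have hSfin : S.Finite := by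
    apply Set.Finite.subset ((Set.finite_Iic n).prod (Set.finite_Iic n))
    rintro ⟨a, b⟩ ⟨_, _, hab⟩
    simp only at hab
    have hb : b ≤ k * b := Nat.le_mul_of_pos_left b hk0
    simp only [Set.mem_prod, Set.mem_Iic]
    omega
  set N := k ^ (s - 5) - r with hN
  set f : ℕ → ℕ × ℕ := fun q => (m + k * q + r, k ^ (g - 1) * m - q) with hf
  have himg : f '' Set.Iio N ⊆ S := by
    rintro p ⟨q, hq, rfl⟩
    obtain ⟨h1, h2, h3⟩ := key q hq
    exact ⟨h1, h2, h3⟩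
  have hinj : Set.InjOn f (Set.Iio N) := by
    intro q1 _ q2 _ h
    have : m + k * q1 + r = m + k * q2 + r := congrArg Prod.fst h
    have : k * q1 = k * q2 := by omega
    exact Nat.eq_of_mul_eq_mul_left hk0 this
  calc N = (Set.Iio N).ncard := by
        rw [← Finset.coe_Iio, Set.ncard_coe_finset, Nat.card_Iio]
    _ = (f '' Set.Iio N).ncard := (Set.ncard_image_of_injOn hinj).symm
    _ ≤ S.ncard := Set.ncard_le_ncard himg hSfin
end

section
/- Let k ≥ 2, g odd with k^g > 4(t_{a+2} - t_0), and suppose (t_i) is strictly increasing with t_{i+a} = k t_i for all i, a odd. If m satisfies k^s t_ℓ ≤ m < k^s t_ℓ + k^{s-4} (with s ≥ 5, 0 ≤ ℓ ≤ a−1) and q satisfies k^{s-1}(t_ℓ − t_{ℓ-1}) + k^{s-5} + r < q ≤ k^{s-1}(t_ℓ − t_{ℓ-2}) with 0 ≤ r < k^g+1, then m − kq + r ∈ [k^s t_{ℓ-2}, k^s t_{ℓ-1}) and k^{g-1}m + q ∈ [k^{s+g-1} t_ℓ, k^{s+g-1} t_{ℓ+1}). -/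
theorem stmt_14 (k a g s ℓ : ℕ) (hk : 2 ≤ k) (ha : Odd a) (ha0 : 0 < a)
    (hg : Odd g) (hg0 : 0 < g) (hs : 5 ≤ s) (hl2 : 2 ≤ ℓ) (hla : ℓ ≤ a - 1)
    (t : ℕ → ℕ) (ht : StrictMono t) (hrec : ∀ i, t (i + a) = k * t i)
    (hgT : 4 * (t (a + 2) - t 0) < k ^ g)
    (m q r : ℕ) (hr : r < k ^ g + 1)
    (hm1 : k ^ s * t ℓ ≤ m) (hm2 : m < k ^ s * t ℓ + k ^ (s - 4))
    (hq1 : k ^ (s - 1) * (t ℓ - t (ℓ - 1)) + k ^ (s - 5) + r < q)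
    (hq2 : q ≤ k ^ (s - 1) * (t ℓ - t (ℓ - 2))) :
    m + r - k * q ∈ Set.Ico (k ^ s * t (ℓ - 2)) (k ^ s * t (ℓ - 1)) ∧
    k ^ (g - 1) * m + q ∈ Set.Ico (k ^ (s + g - 1) * t ℓ) (k ^ (s + g - 1) * t (ℓ + 1)) := by
  obtain ⟨u, rfl⟩ : ∃ u, s = u + 5 := ⟨s - 5, by omega⟩
  obtain ⟨v, rfl⟩ : ∃ v, g = v + 1 := ⟨g - 1, by omega⟩
  obtain ⟨w, rfl⟩ : ∃ w, ℓ = w + 2 := ⟨ℓ - 2, by omega⟩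
  obtain ⟨d1, hd1⟩ : ∃ d, t (w + 1) = t w + d + 1 :=
    ⟨t (w + 1) - t w - 1, by have := @ht w (w + 1) (by omega); omega⟩
  obtain ⟨d2, hd2⟩ : ∃ d, t (w + 2) = t (w + 1) + d + 1 :=
    ⟨t (w + 2) - t (w + 1) - 1, by have := @ht (w + 1) (w + 2) (by omega); omega⟩
  obtain ⟨d3, hd3⟩ : ∃ d, t (w + 3) = t (w + 2) + d + 1 :=
    ⟨t (w + 3) - t (w + 2) - 1, by have := @ht (w + 2) (w + 3) (by omega); omega⟩
  have hmono1 : t (w + 2) ≤ t (a + 2) := ht.monotone (by omega)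
  have hmono0 : t 0 ≤ t w := ht.monotone (Nat.zero_le w)
  have hkey : 4 * (d1 + d2 + 2) < k ^ (v + 1) := by omega
  -- normalize the nat-subtraction indices and exponents (they are defeq)
  have hq1' : k ^ (u + 4) * (d2 + 1) + k ^ u + r < q := by
    have h : t (w + 2) - t (w + 1) = d2 + 1 := by omega
    have := hq1; rw [show (w + 2 - 1) = w + 1 from rfl, h] at this
    exact this
  have hq2' : q ≤ k ^ (u + 4) * (d1 + d2 + 2) := by
    have h : t (w + 2) - t w = d1 + d2 + 2 := by omega
    have := hq2; rw [show (w + 2 - 2) = w from rfl, h] at this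
    exact this
  have e4 : k ^ (u + 4) = k ^ 4 * k ^ u := by ring
  have e5 : k ^ (u + 5) = k * (k ^ 4 * k ^ u) := by ring
  have e41 : k ^ (u + 5 - 4) = k * k ^ u := by
    rw [show u + 5 - 4 = u + 1 from rfl]; ring
  have ev : k ^ (v + 1) = k * k ^ v := by ring
  have eg : k ^ (u + 5 + (v + 1) - 1) = k * (k ^ 4 * k ^ u) * k ^ v := by
    rw [show u + 5 + (v + 1) - 1 = u + 5 + v from rfl]; ring
  have hE1 : 1 ≤ k ^ u := Nat.one_le_pow _ _ (by omega)
  have hF1 : 1 ≤ k ^ v := Nat.one_le_pow _ _ (by omega)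
  have hK4 : 16 ≤ k ^ 4 := by calc (16 : ℕ) = 2 ^ 4 := by norm_num
                                  _ ≤ k ^ 4 := Nat.pow_le_pow_left hk 4
  rw [e4] at hq1' hq2'
  rw [e5, e41] at hm2
  rw [e5] at hm1
  rw [ev] at hkey
  set E := k ^ u with hEdef
  set F := k ^ v with hFdef
  set P := k ^ 4 * E with hPdef
  -- part 1, lower bound helper
  have hA1 : k * P * t w + k * q ≤ m + r := by
    have h1 : k * q ≤ k * (P * (d1 + d2 + 2)) := Nat.mul_le_mul_left k hq2'
    have h2 : k * P * t w + k * (P * (d1 + d2 + 2)) = k * P * t (w + 2) := by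
      rw [show t (w + 2) = t w + (d1 + d2 + 2) from by omega]; ring
    omega
  -- part 1, upper bound helper
  have hA2 : m + r < k * P * t (w + 1) + k * q := by
    have h1 : k * (P * (d2 + 1)) + k * E + k * r + k ≤ k * q := by
      calc k * (P * (d2 + 1)) + k * E + k * r + k
          = k * (P * (d2 + 1) + E + r + 1) := by ring
        _ ≤ k * q := Nat.mul_le_mul_left k (by omega)
    have h2 : k * P * t (w + 1) + k * (P * (d2 + 1)) = k * P * t (w + 2) := by
      rw [show t (w + 2) = t (w + 1) + (d2 + 1) from by omega]; ring
    have h3 : r ≤ k * r := Nat.le_mul_of_pos_left r (by omega)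
    omega
  refine ⟨⟨?_, ?_⟩, ?_, ?_⟩
  · rw [show (w + 2 - 2) = w from rfl, e5]
    omega
  · rw [show (w + 2 - 1) = w + 1 from rfl, e5]
    omega
  · rw [eg, show (v + 1 - 1) = v from rfl, ← hFdef]
    calc k * (k ^ 4 * E) * F * t (w + 2)
        = F * (k * P * t (w + 2)) := by rw [hPdef]; ring
      _ ≤ F * m := Nat.mul_le_mul_left F hm1
      _ ≤ F * m + q := Nat.le_add_right _ _
  · rw [eg, show (v + 1 - 1) = v from rfl, ← hFdef]
    have h1 : F * m + F ≤ F * (k * P * t (w + 2)) + F * k * E := by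
      calc F * m + F = F * (m + 1) := by ring
        _ ≤ F * (k * P * t (w + 2) + k * E) := Nat.mul_le_mul_left F (by omega)
        _ = F * (k * P * t (w + 2)) + F * k * E := by ring
    have h2 : F * k * E + P * (d1 + d2 + 2) ≤ k * P * F := by
      have hha : k ^ 4 * E * (4 * (d1 + d2 + 2) + 1) ≤ k ^ 4 * E * (k * F) :=
        Nat.mul_le_mul_left _ (by omega)
      have hhb : 4 * (k * E * F) ≤ k ^ 4 * (k * E * F) :=
        Nat.mul_le_mul_right _ (by omega)
      rw [hPdef]
      linarith [hha, hhb, Nat.zero_le (k ^ 4 * E * (k * F)), Nat.zero_le (k ^ 4 * E)]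
    have h4 : F * (k * P * t (w + 2)) + k * P * F ≤ k * P * F * t (w + 3) := by
      have h6 : k * P * F * 1 ≤ k * P * F * (d3 + 1) :=
        Nat.mul_le_mul_left _ (by omega)
      have h5 : k * P * F * t (w + 3)
          = F * (k * P * t (w + 2)) + k * P * F * (d3 + 1) := by
        rw [show t (w + 3) = t (w + 2) + (d3 + 1) from by omega]; ring
      linarith [h6]
    have h3 : q ≤ P * (d1 + d2 + 2) := hq2'
    calc F * m + q < F * m + F + q := by omega
      _ ≤ F * (k * P * t (w + 2)) + F * k * E + q := by omega
      _ ≤ F * (k * P * t (w + 2)) + F * k * E + P * (d1 + d2 + 2) := by omega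
      _ ≤ F * (k * P * t (w + 2)) + k * P * F := by omega
      _ ≤ k * (k ^ 4 * E) * F * t (w + 3) := by rw [hPdef] at h4 ⊢; linarith [h4]
end
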